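/- Let σ : ℝ → ℝ⁵ be C^∞ with ⟨σ(ρ), σ(ρ)⟩ = 1 and ⟨σ'(ρ), σ'(ρ)⟩ > 0 for all ρ (derivatives with respect to ρ). Set T(ρ) = √⟨σ'(ρ), σ'(ρ)⟩, v₂ = σ'/T, and σ_{ll} = v₂'/T (the second derivative of σ with respect to its arc-length l). Assume ⟨σ + σ_{ll}, σ + σ_{ll}⟩ = 0 identically, set n = T·(σ + σ_{ll}), and assume ⟨n'(ρ), n'(ρ)⟩ = 1 for all ρ (ρ is the conformal arc-length). Define Q(ρ) = −(1/2)·⟨n''(ρ), n''(ρ)⟩. Then n satisfies the third-order differential equation n''' = Q'·n + 2Q·n' + σ'/T. (This is the condensed form of the conformal Frenet formula of Sulanke; Q is the conformal curvature and T the conformal torsion.) -/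

import Mathlib

set_option maxRecDepth 4000

noncomputable section

def mink5 (x y : Fin 5 → ℝ) : ℝ :=
  -(x 0 * y 0) + x 1 * y 1 + x 2 * y 2 + x 3 * y 3 + x 4 * y 4

lemma mink5_symm (x y : Fin 5 → ℝ) : mink5 x y = mink5 y x := by
  simp only [mink5]; ring

lemma mink5_smul_right (x : Fin 5 → ℝ) (a : ℝ) (y : Fin 5 → ℝ) :
    mink5 x (a • y) = a * mink5 x y := by
  simp only [mink5, Pi.smul_apply, smul_eq_mul]; ring

lemma mink5_smul_left (a : ℝ) (x y : Fin 5 → ℝ) :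
    mink5 (a • x) y = a * mink5 x y := by
  simp only [mink5, Pi.smul_apply, smul_eq_mul]; ring

lemma mink5_add_right (x y z : Fin 5 → ℝ) :
    mink5 x (y + z) = mink5 x y + mink5 x z := by
  simp only [mink5, Pi.add_apply]; ring

lemma mink5_add_left (x y z : Fin 5 → ℝ) :
    mink5 (x + y) z = mink5 x z + mink5 y z := by
  simp only [mink5, Pi.add_apply]; ring

lemma mink5_sub_right (x y z : Fin 5 → ℝ) :
    mink5 x (y - z) = mink5 x y - mink5 x z := by
  simp only [mink5, Pi.sub_apply]; ring

lemma hasDerivAt_mink5 {f g : ℝ → Fin 5 → ℝ} {f' g' : Fin 5 → ℝ} {x : ℝ}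
    (hf : HasDerivAt f f' x) (hg : HasDerivAt g g' x) :
    HasDerivAt (fun t => mink5 (f t) (g t))
      (mink5 f' (g x) + mink5 (f x) g') x := by
  have hfi := hasDerivAt_pi.mp hf
  have hgi := hasDerivAt_pi.mp hg
  have H := ((((hfi 0).mul (hgi 0)).neg.add ((hfi 1).mul (hgi 1))).add
      ((hfi 2).mul (hgi 2))).add (((hfi 3).mul (hgi 3)).add ((hfi 4).mul (hgi 4)))
  refine HasDerivAt.congr_deriv (H.congr_of_eventuallyEq (Filter.Eventually.of_forall fun t => ?_)) ?_
  · simp only [mink5, Pi.add_apply, Pi.mul_apply, Pi.neg_apply]; ring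
  · simp only [mink5]; ring

lemma contDiff_mink5 {f g : ℝ → Fin 5 → ℝ}
    (hf : ContDiff ℝ (⊤ : ℕ∞) f) (hg : ContDiff ℝ (⊤ : ℕ∞) g) :
    ContDiff ℝ (⊤ : ℕ∞) (fun t => mink5 (f t) (g t)) := by
  have hfi := fun i => (contDiff_pi.mp hf) i
  have hgi := fun i => (contDiff_pi.mp hg) i
  simp only [mink5]
  exact (((((hfi 0).mul (hgi 0)).neg.add ((hfi 1).mul (hgi 1))).add
      ((hfi 2).mul (hgi 2))).add ((hfi 3).mul (hgi 3))).add ((hfi 4).mul (hgi 4))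

lemma deriv_mink5_const {f g : ℝ → Fin 5 → ℝ} {c : ℝ} (hf : Differentiable ℝ f)
    (hg : Differentiable ℝ g) (h : ∀ t, mink5 (f t) (g t) = c) (ρ : ℝ) :
    mink5 (deriv f ρ) (g ρ) + mink5 (f ρ) (deriv g ρ) = 0 := by
  have hd := hasDerivAt_mink5 (hf ρ).hasDerivAt (hg ρ).hasDerivAt
  have he : (fun t => mink5 (f t) (g t)) = fun _ => c := funext h
  rw [he] at hd
  exact hd.unique (hasDerivAt_const ρ c)

lemma mink5_span_eq_zero (E : Fin 5 → (Fin 5 → ℝ)) (w : Fin 5 → ℝ) (q : ℝ)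
    (hG : ∀ i j, mink5 (E i) (E j) =
      (!![1,0,0,0,0; 0,1,0,0,0; 0,0,0,0,-1; 0,0,0,1,0; 0,0,-1,0,-2*q] :
        Matrix (Fin 5) (Fin 5) ℝ) i j)
    (hw : ∀ i, mink5 (E i) w = 0) : w = 0 := by
  set J : Matrix (Fin 5) (Fin 5) ℝ := Matrix.diagonal ![-1,1,1,1,1] with hJ
  set M : Matrix (Fin 5) (Fin 5) ℝ := Matrix.of fun i k => E i k with hM
  have hMG : M * J * M.transpose =
      !![1,0,0,0,0; 0,1,0,0,0; 0,0,0,0,-1; 0,0,0,1,0; 0,0,-1,0,-2*q] := by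
    ext i j
    rw [← hG i j]
    simp [hM, hJ, Matrix.mul_apply, Matrix.diagonal_apply, Fin.sum_univ_five, mink5]
  have hdetM : IsUnit M.det := by
    have h := congrArg Matrix.det hMG
    rw [Matrix.det_mul, Matrix.det_mul, Matrix.det_transpose] at h
    have hdG : (M.det * J.det * M.det) = -1 := by
      rw [h]; simp [Matrix.det_succ_row_zero, Fin.sum_univ_succ]
    have hdJ : J.det = -1 := by
      rw [hJ, Matrix.det_diagonal]
      simp [Fin.prod_univ_five]
    rw [hdJ] at hdG
    refine isUnit_iff_ne_zero.mpr fun h0 => ?_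
    rw [h0] at hdG; norm_num at hdG
  have hvec : M.mulVec (J.mulVec w) = 0 := by
    ext i
    simp only [Pi.zero_apply]
    rw [← hw i]
    simp [hM, hJ, Matrix.mulVec, dotProduct, Matrix.diagonal_apply,
      Fin.sum_univ_five, mink5]
  have hJw : J.mulVec w = 0 := by
    have h2 : M⁻¹.mulVec (M.mulVec (J.mulVec w)) = J.mulVec w := by
      rw [Matrix.mulVec_mulVec, Matrix.nonsing_inv_mul M hdetM, Matrix.one_mulVec]
    rw [← h2, hvec, Matrix.mulVec_zero]
  funext i
  have hi := congrFun hJw i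
  fin_cases i <;>
    · simp [hJ, Matrix.mulVec_diagonal] at hi
      simpa using hi

/-- **condensed conformal Frenet formula, after Sulanke.** Let `σ` be the
curve of osculating spheres in `Λ⁴ ⊂ ℝ⁵₁`, parameterized by the conformal arc-length `ρ`,
with `⟨σ,σ⟩ = 1` and `⟨σ',σ'⟩ > 0`; set `T = √⟨σ',σ'⟩` (the conformal torsion),
`v₂ = σ'/T`, `σ_{ll} = v₂'/T` (second derivative with respect to the arc-length of `σ`).
Assume the geodesic curvature vector `σ + σ_{ll}` is light-like, set `n = T·(σ + σ_{ll})`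
and assume `⟨n',n'⟩ = 1`; let `Q = -½⟨n'',n''⟩` be the conformal curvature. Then
`n''' = Q'·n + 2Q·n' + σ'/T`. -/
theorem frenet_formula_space_condensed
    (σ : ℝ → Fin 5 → ℝ) (hσ : ContDiff ℝ (⊤ : ℕ∞) σ)
    (h0 : ∀ ρ, mink5 (σ ρ) (σ ρ) = 1)
    (h1 : ∀ ρ, 0 < mink5 (deriv σ ρ) (deriv σ ρ))
    (T : ℝ → ℝ) (hT : ∀ ρ, T ρ = Real.sqrt (mink5 (deriv σ ρ) (deriv σ ρ)))
    (v₂ : ℝ → Fin 5 → ℝ) (hv₂ : ∀ ρ, v₂ ρ = (T ρ)⁻¹ • deriv σ ρ)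
    (σll : ℝ → Fin 5 → ℝ) (hσll : ∀ ρ, σll ρ = (T ρ)⁻¹ • deriv v₂ ρ)
    (hlight : ∀ ρ, mink5 (σ ρ + σll ρ) (σ ρ + σll ρ) = 0)
    (n : ℝ → Fin 5 → ℝ) (hn : ∀ ρ, n ρ = T ρ • (σ ρ + σll ρ))
    (hconf : ∀ ρ, mink5 (deriv n ρ) (deriv n ρ) = 1)
    (Q : ℝ → ℝ)
    (hQ : ∀ ρ, Q ρ = -(1/2) * mink5 (iteratedDeriv 2 n ρ) (iteratedDeriv 2 n ρ)) :
    ∀ ρ : ℝ, iteratedDeriv 3 n ρ =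
      deriv Q ρ • n ρ + (2 * Q ρ) • deriv n ρ + (T ρ)⁻¹ • deriv σ ρ := by
  have hσc : ContDiff ℝ (⊤ : ℕ∞) σ := hσ.of_le (by simp)
  obtain ⟨hσdiff, hσ'c⟩ := contDiff_infty_iff_deriv.mp hσc
  have hS : ContDiff ℝ (⊤ : ℕ∞) (fun ρ => mink5 (deriv σ ρ) (deriv σ ρ)) :=
    contDiff_mink5 hσ'c hσ'c
  have hTfun : T = fun ρ => Real.sqrt (mink5 (deriv σ ρ) (deriv σ ρ)) := funext hT
  have hTpos : ∀ ρ, 0 < T ρ := fun ρ => by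
    rw [hT]; exact Real.sqrt_pos.mpr (h1 ρ)
  have hTne : ∀ ρ, T ρ ≠ 0 := fun ρ => (hTpos ρ).ne'
  have hTc : ContDiff ℝ (⊤ : ℕ∞) T := by
    rw [hTfun]
    exact contDiff_iff_contDiffAt.mpr fun ρ =>
      (Real.contDiffAt_sqrt (h1 ρ).ne').comp ρ hS.contDiffAt
  have hTsq : ∀ ρ, T ρ * T ρ = mink5 (deriv σ ρ) (deriv σ ρ) := fun ρ => by
    rw [hT]; exact Real.mul_self_sqrt (h1 ρ).le
  have hTinv : ContDiff ℝ (⊤ : ℕ∞) (fun ρ => (T ρ)⁻¹) := hTc.inv hTne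
  have hv₂fun : v₂ = fun ρ => (T ρ)⁻¹ • deriv σ ρ := funext hv₂
  have hv₂c : ContDiff ℝ (⊤ : ℕ∞) v₂ := by rw [hv₂fun]; exact hTinv.smul hσ'c
  obtain ⟨hv₂diff, hv₂'c⟩ := contDiff_infty_iff_deriv.mp hv₂c
  have hσllfun : σll = fun ρ => (T ρ)⁻¹ • deriv v₂ ρ := funext hσll
  have hσllc : ContDiff ℝ (⊤ : ℕ∞) σll := by rw [hσllfun]; exact hTinv.smul hv₂'c
  have hnfun : n = fun ρ => T ρ • (σ ρ + σll ρ) := funext hn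
  have hnc : ContDiff ℝ (⊤ : ℕ∞) n := by
    rw [hnfun]; exact hTc.smul (hσc.add hσllc)
  obtain ⟨hndiff, hn'c⟩ := contDiff_infty_iff_deriv.mp hnc
  obtain ⟨hn'diff, hn''c⟩ := contDiff_infty_iff_deriv.mp hn'c
  obtain ⟨hn''diff, hn'''c⟩ := contDiff_infty_iff_deriv.mp hn''c
  have hiter2 : iteratedDeriv 2 n = deriv (deriv n) := by
    rw [iteratedDeriv_succ, iteratedDeriv_one]
  have hiter3 : iteratedDeriv 3 n = deriv (deriv (deriv n)) := by
    rw [iteratedDeriv_succ, iteratedDeriv_succ, iteratedDeriv_one]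
  have hσ'v : ∀ ρ, deriv σ ρ = T ρ • v₂ ρ := fun ρ => by
    rw [hv₂, smul_smul, mul_inv_cancel₀ (hTne ρ), one_smul]
  have hv₂'s : ∀ ρ, deriv v₂ ρ = T ρ • σll ρ := fun ρ => by
    rw [hσll, smul_smul, mul_inv_cancel₀ (hTne ρ), one_smul]
  -- scalar product identities
  have P1 : ∀ ρ, mink5 (σ ρ) (deriv σ ρ) = 0 := fun ρ => by
    have h := deriv_mink5_const hσdiff hσdiff h0 ρ
    linarith [mink5_symm (σ ρ) (deriv σ ρ)]
  have P3 : ∀ ρ, mink5 (σ ρ) (v₂ ρ) = 0 := fun ρ => by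
    rw [hv₂, mink5_smul_right, P1, mul_zero]
  have P4 : ∀ ρ, mink5 (v₂ ρ) (v₂ ρ) = 1 := fun ρ => by
    rw [hv₂, mink5_smul_right, mink5_symm, mink5_smul_right, ← hTsq ρ]
    have h2 : (T ρ)⁻¹ * T ρ = 1 := inv_mul_cancel₀ (hTne ρ)
    linear_combination ((T ρ)⁻¹ * T ρ + 1) * h2
  have P5 : ∀ ρ, mink5 (v₂ ρ) (deriv v₂ ρ) = 0 := fun ρ => by
    have h := deriv_mink5_const hv₂diff hv₂diff P4 ρ
    linarith [mink5_symm (v₂ ρ) (deriv v₂ ρ)]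
  have P5' : ∀ ρ, mink5 (v₂ ρ) (σll ρ) = 0 := fun ρ => by
    rw [hσll, mink5_smul_right, P5, mul_zero]
  have P6 : ∀ ρ, mink5 (σ ρ) (σll ρ) = -1 := fun ρ => by
    have h := deriv_mink5_const hσdiff hv₂diff P3 ρ
    rw [hσ'v ρ, hv₂'s ρ, mink5_smul_left, mink5_smul_right, P4] at h
    have hm : T ρ * (1 + mink5 (σ ρ) (σll ρ)) = 0 := by linear_combination h
    rcases mul_eq_zero.mp hm with h' | h'
    · exact absurd h' (hTne ρ)
    · linarith
  have P7 : ∀ ρ, mink5 (σll ρ) (σll ρ) = 1 := fun ρ => by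
    have h := hlight ρ
    rw [mink5_add_left, mink5_add_right, mink5_add_right] at h
    linarith [h0 ρ, P6 ρ, mink5_symm (σll ρ) (σ ρ)]
  have P8σ : ∀ ρ, mink5 (n ρ) (σ ρ) = 0 := fun ρ => by
    rw [hn, mink5_smul_left, mink5_add_left]
    linear_combination (T ρ) * (h0 ρ + mink5_symm (σll ρ) (σ ρ) + P6 ρ)
  have P8v : ∀ ρ, mink5 (n ρ) (v₂ ρ) = 0 := fun ρ => by
    rw [hn, mink5_smul_left, mink5_add_left]
    linear_combination (T ρ) * (P3 ρ + mink5_symm (σll ρ) (v₂ ρ) + P5' ρ)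
  have P8l : ∀ ρ, mink5 (n ρ) (σll ρ) = 0 := fun ρ => by
    rw [hn, mink5_smul_left, mink5_add_left]
    linear_combination (T ρ) * (P6 ρ + P7 ρ)
  have P8n : ∀ ρ, mink5 (n ρ) (n ρ) = 0 := fun ρ => by
    rw [hn, mink5_smul_left, mink5_smul_right]
    linear_combination (T ρ * T ρ) * hlight ρ
  have hσlleq : ∀ ρ, σll ρ = (T ρ)⁻¹ • n ρ - σ ρ := fun ρ => by
    rw [hn, smul_smul, inv_mul_cancel₀ (hTne ρ), one_smul]
    abel
  have P9 : ∀ ρ, mink5 (deriv n ρ) (σ ρ) = 0 := fun ρ => by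
    have h := deriv_mink5_const hndiff hσdiff P8σ ρ
    rw [hσ'v ρ, mink5_smul_right] at h
    linear_combination h - T ρ * P8v ρ
  have P10 : ∀ ρ, mink5 (deriv n ρ) (v₂ ρ) = 0 := fun ρ => by
    have h := deriv_mink5_const hndiff hv₂diff P8v ρ
    rw [hv₂'s ρ, mink5_smul_right] at h
    linear_combination h - T ρ * P8l ρ
  have P11 : ∀ ρ, mink5 (deriv n ρ) (n ρ) = 0 := fun ρ => by
    have h := deriv_mink5_const hndiff hndiff P8n ρ
    linarith [mink5_symm (n ρ) (deriv n ρ)]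
  have P12 : ∀ ρ, mink5 (deriv n ρ) (σll ρ) = 0 := fun ρ => by
    rw [hσlleq ρ, mink5_sub_right, mink5_smul_right]
    linear_combination (T ρ)⁻¹ * P11 ρ - P9 ρ
  have P13 : ∀ ρ, mink5 (deriv (deriv n) ρ) (σ ρ) = 0 := fun ρ => by
    have h := deriv_mink5_const hn'diff hσdiff P9 ρ
    rw [hσ'v ρ, mink5_smul_right] at h
    linear_combination h - T ρ * P10 ρ
  have P14 : ∀ ρ, mink5 (deriv (deriv n) ρ) (v₂ ρ) = 0 := fun ρ => by
    have h := deriv_mink5_const hn'diff hv₂diff P10 ρ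
    rw [hv₂'s ρ, mink5_smul_right] at h
    linear_combination h - T ρ * P12 ρ
  have P15 : ∀ ρ, mink5 (deriv (deriv n) ρ) (n ρ) = -1 := fun ρ => by
    have h := deriv_mink5_const hn'diff hndiff P11 ρ
    linarith [hconf ρ]
  have P16 : ∀ ρ, mink5 (deriv (deriv n) ρ) (deriv n ρ) = 0 := fun ρ => by
    have h := deriv_mink5_const hn'diff hn'diff hconf ρ
    linarith [mink5_symm (deriv n ρ) (deriv (deriv n) ρ)]
  have P17 : ∀ ρ, mink5 (deriv (deriv n) ρ) (deriv (deriv n) ρ) = -2 * Q ρ := fun ρ => by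
    have h := hQ ρ
    rw [hiter2] at h
    linarith
  have P18 : ∀ ρ, mink5 (deriv (deriv n) ρ) (σll ρ) = -(T ρ)⁻¹ := fun ρ => by
    rw [hσlleq ρ, mink5_sub_right, mink5_smul_right]
    linear_combination (T ρ)⁻¹ * P15 ρ - P13 ρ
  have P19 : ∀ ρ, mink5 (deriv (deriv (deriv n)) ρ) (σ ρ) = 0 := fun ρ => by
    have h := deriv_mink5_const hn''diff hσdiff P13 ρ
    rw [hσ'v ρ, mink5_smul_right] at h
    linear_combination h - T ρ * P14 ρ
  have P20 : ∀ ρ, mink5 (deriv (deriv (deriv n)) ρ) (v₂ ρ) = 1 := fun ρ => by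
    have h := deriv_mink5_const hn''diff hv₂diff P14 ρ
    rw [hv₂'s ρ, mink5_smul_right] at h
    have hTT : T ρ * (T ρ)⁻¹ = 1 := mul_inv_cancel₀ (hTne ρ)
    linear_combination h - T ρ * P18 ρ + hTT
  have P21 : ∀ ρ, mink5 (deriv (deriv (deriv n)) ρ) (n ρ) = 0 := fun ρ => by
    have h := deriv_mink5_const hn''diff hndiff P15 ρ
    linarith [P16 ρ]
  have P22 : ∀ ρ, mink5 (deriv (deriv (deriv n)) ρ) (deriv n ρ) = 2 * Q ρ := fun ρ => by
    have h := deriv_mink5_const hn''diff hn'diff P16 ρ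
    linarith [P17 ρ]
  have hQd : ∀ ρ, deriv Q ρ = -(1/2) *
      (mink5 (deriv (deriv (deriv n)) ρ) (deriv (deriv n) ρ)
        + mink5 (deriv (deriv n) ρ) (deriv (deriv (deriv n)) ρ)) := fun ρ => by
    have hQfun : Q = fun t => -(1/2) * mink5 (deriv (deriv n) t) (deriv (deriv n) t) := by
      funext t; rw [hQ t, hiter2]
    rw [hQfun]
    exact (HasDerivAt.const_mul (-(1/2) : ℝ)
      (hasDerivAt_mink5 (hn''diff ρ).hasDerivAt (hn''diff ρ).hasDerivAt)).deriv
  -- the main argument, pointwise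
  intro ρ
  have hw0 : ∀ x : Fin 5 → ℝ, mink5 x (deriv (deriv (deriv n)) ρ - deriv Q ρ • n ρ
      - (2 * Q ρ) • deriv n ρ - v₂ ρ)
      = mink5 x (deriv (deriv (deriv n)) ρ) - deriv Q ρ * mink5 x (n ρ)
        - (2 * Q ρ) * mink5 x (deriv n ρ) - mink5 x (v₂ ρ) := fun x => by
    rw [mink5_sub_right, mink5_sub_right, mink5_sub_right,
      mink5_smul_right, mink5_smul_right]
  have hwzero : deriv (deriv (deriv n)) ρ - deriv Q ρ • n ρ
      - (2 * Q ρ) • deriv n ρ - v₂ ρ = 0 := by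
    apply mink5_span_eq_zero ![σ ρ, v₂ ρ, n ρ, deriv n ρ, deriv (deriv n) ρ] _ (Q ρ)
    · intro i j
      fin_cases i <;> fin_cases j <;>
        norm_num [Matrix.cons_val_zero, Matrix.cons_val_one, Matrix.cons_val_succ] <;>
        linarith [h0 ρ, P3 ρ, P8σ ρ, P9 ρ, P13 ρ, P4 ρ, P8v ρ, P10 ρ, P14 ρ,
          P8n ρ, P11 ρ, P15 ρ, hconf ρ, P16 ρ, P17 ρ,
          mink5_symm (σ ρ) (v₂ ρ), mink5_symm (σ ρ) (n ρ),
          mink5_symm (σ ρ) (deriv n ρ), mink5_symm (σ ρ) (deriv (deriv n) ρ),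
          mink5_symm (v₂ ρ) (n ρ), mink5_symm (v₂ ρ) (deriv n ρ),
          mink5_symm (v₂ ρ) (deriv (deriv n) ρ), mink5_symm (n ρ) (deriv n ρ),
          mink5_symm (n ρ) (deriv (deriv n) ρ),
          mink5_symm (deriv n ρ) (deriv (deriv n) ρ)]
    · intro i
      fin_cases i
      · show mink5 (σ ρ) _ = 0
        rw [hw0]
        linear_combination mink5_symm (σ ρ) (deriv (deriv (deriv n)) ρ) + P19 ρ
          - deriv Q ρ * (mink5_symm (σ ρ) (n ρ) + P8σ ρ)
          - (2 * Q ρ) * (mink5_symm (σ ρ) (deriv n ρ) + P9 ρ) - P3 ρ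
      · show mink5 (v₂ ρ) _ = 0
        rw [hw0]
        linear_combination mink5_symm (v₂ ρ) (deriv (deriv (deriv n)) ρ) + P20 ρ
          - deriv Q ρ * (mink5_symm (v₂ ρ) (n ρ) + P8v ρ)
          - (2 * Q ρ) * (mink5_symm (v₂ ρ) (deriv n ρ) + P10 ρ) - P4 ρ
      · show mink5 (n ρ) _ = 0
        rw [hw0]
        linear_combination mink5_symm (n ρ) (deriv (deriv (deriv n)) ρ) + P21 ρ
          - deriv Q ρ * P8n ρ
          - (2 * Q ρ) * (mink5_symm (n ρ) (deriv n ρ) + P11 ρ) - P8v ρ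
      · show mink5 (deriv n ρ) _ = 0
        rw [hw0]
        linear_combination mink5_symm (deriv n ρ) (deriv (deriv (deriv n)) ρ) + P22 ρ
          - deriv Q ρ * P11 ρ - (2 * Q ρ) * hconf ρ - P10 ρ
      · show mink5 (deriv (deriv n) ρ) _ = 0
        rw [hw0]
        linear_combination hQd ρ
          - (1/2) * mink5_symm (deriv (deriv (deriv n)) ρ) (deriv (deriv n) ρ)
          - deriv Q ρ * P15 ρ - (2 * Q ρ) * P16 ρ - P14 ρ
  rw [hiter3, ← hv₂ ρ]
  rw [sub_sub, sub_sub, sub_eq_zero] at hwzero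
  exact hwzero.trans (add_assoc _ _ _).symm
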